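/- The Fourier expansion of δ1 in q = e^{2πiτ} begins δ1(τ) = 1/4 + 6q + 6q^2 + ⋯; precisely, δ1 is a holomorphic function of q on the punctured unit disc extending holomorphically to q = 0, and its Taylor coefficients at q = 0 in degrees 0, 1, 2 are 1/4, 6 and 6 respectively. -/

import Mathlib

open Complex Real

/-- The nome `q = e^{2πiτ}`. -/
noncomputable def qq (τ : ℂ) : ℂ := Complex.exp (2 * π * Complex.I * τ)

/-- The half-nome `q^{1/2} = e^{πiτ}`. -/
noncomputable def qh (τ : ℂ) : ℂ := Complex.exp (π * Complex.I * τ)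

/-- The Jacobi theta constant `θ₁(0,τ) = 2 q^{1/8} ∏_{j≥1} (1-q^j)(1+q^j)^2`. -/
noncomputable def theta1 (τ : ℂ) : ℂ :=
  2 * Complex.exp (π * Complex.I * τ / 4) *
    ∏' j : ℕ, ((1 - qq τ ^ (j + 1)) * (1 + qq τ ^ (j + 1)) ^ 2)

/-- The Jacobi theta constant `θ₂(0,τ) = ∏_{j≥1} (1-q^j)(1-q^{j-1/2})^2`. -/
noncomputable def theta2 (τ : ℂ) : ℂ :=
  ∏' j : ℕ, ((1 - qq τ ^ (j + 1)) * (1 - qh τ ^ (2 * j + 1)) ^ 2)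

/-- The Jacobi theta constant `θ₃(0,τ) = ∏_{j≥1} (1-q^j)(1+q^{j-1/2})^2`. -/
noncomputable def theta3 (τ : ℂ) : ℂ :=
  ∏' j : ℕ, ((1 - qq τ ^ (j + 1)) * (1 + qh τ ^ (2 * j + 1)) ^ 2)

/-- `δ₁(τ) = (θ₂(0,τ)⁴ + θ₃(0,τ)⁴)/8`. -/
noncomputable def delta1 (τ : ℂ) : ℂ := (theta2 τ ^ 4 + theta3 τ ^ 4) / 8

/-!
With `w = q^{1/2}`, both theta constants are values of one product
`F(w) = ∏ (1 - w^{2j+2}) (1 + w^{2j+1})²`, namely `θ₃ = F(w)` and `θ₂ = F(-w)`. Hence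
`δ₁ = Φ(w) := (F(-w)⁴ + F(w)⁴)/8` is even in `w`, i.e. `1`-periodic in `τ`, and being bounded
at `i∞` its cusp function `g` is holomorphic on the unit `q`-disc.
The first three factors of `F` give `F(w) = 1 + 2w + 2w⁴ + O(w⁶)`, the remaining product being
`1 + O(w⁶)`. Therefore `Φ(w) = 1/4 + 6w² + 6w⁴ + O(w⁶)`, that is
`g(q) = 1/4 + 6q + 6q² + O(q³)`, and such an expansion determines the Taylor coefficients.
-/

open Filter Topology Asymptotics Metric Function.Periodic

section InfiniteProducts

variable {ι R : Type*} [NormedCommRing R] [NormOneClass R] [CompleteSpace R]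

theorem norm_tprod_one_add_sub_one_le {f : ι → R} (hf : Summable (‖f ·‖)) :
    ‖∏' i, (1 + f i) - 1‖ ≤ Real.exp (∑' i, ‖f i‖) - 1 := by
  refine le_of_tendsto' ((multipliable_one_add_of_summable hf).hasProd.sub_const 1).norm
    fun s => (s.norm_prod_one_add_sub_one_le f).trans ?_
  gcongr
  exact hf.sum_le_tsum s fun i _ => norm_nonneg _

theorem isBigO_tprod_one_add_sub_one {α E : Type*} [Norm E] {l : Filter α} {f : ι → α → R}
    {u : ι → ℝ} {g : α → E} (hu : Summable u) (hg : Tendsto (‖g ·‖) l (𝓝 0))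
    (hf : ∀ᶠ x in l, ∀ i, ‖f i x‖ ≤ u i * ‖g x‖) :
    (fun x => ∏' i, (1 + f i x) - 1) =O[l] g := by
  set S := ∑' i, u i
  have hsmall : ∀ᶠ x in l, S * ‖g x‖ ≤ 1 := by
    have := hg.const_mul S
    rw [mul_zero] at this
    exact this.eventually_le_const one_pos
  refine IsBigO.of_bound (2 * S) ?_
  filter_upwards [hf, hsmall] with x hfx hx
  have hsum : Summable (‖f · x‖) :=
    (hu.mul_right ‖g x‖).of_nonneg_of_le (fun i => norm_nonneg _) hfx
  have hle : ∑' i, ‖f i x‖ ≤ S * ‖g x‖ := by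
    rw [← tsum_mul_right]
    exact hsum.tsum_le_tsum hfx (hu.mul_right _)
  have h0 : 0 ≤ ∑' i, ‖f i x‖ := tsum_nonneg fun i => norm_nonneg _
  have hexp := Real.abs_exp_sub_one_le (x := ∑' i, ‖f i x‖)
    (by rw [abs_of_nonneg h0]; linarith)
  rw [abs_of_nonneg h0] at hexp
  calc ‖∏' i, (1 + f i x) - 1‖ ≤ Real.exp (∑' i, ‖f i x‖) - 1 :=
        norm_tprod_one_add_sub_one_le hsum
    _ ≤ 2 * ∑' i, ‖f i x‖ := (le_abs_self _).trans hexp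
    _ ≤ 2 * S * ‖g x‖ := by linarith

end InfiniteProducts

theorem differentiableOn_tprod_one_add {f : ℕ → ℂ → ℂ} (hf : ∀ j, Differentiable ℂ (f j))
    {C : ℝ} (hbound : ∀ j w, ‖w‖ < 1 → ‖f j w‖ ≤ C * ‖w‖ ^ j) :
    DifferentiableOn ℂ (fun w => ∏' j, (1 + f j w)) (ball 0 1) := by
  intro w hw
  obtain ⟨r, hwr, hr1⟩ := exists_between (mem_ball_zero_iff.mp hw)
  have hC : 0 ≤ C := (norm_nonneg _).trans (by simpa using hbound 0 0 (by simp))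
  have hprod : HasProdLocallyUniformlyOn (fun j w => 1 + f j w) (fun w => ∏' j, (1 + f j w))
      (ball 0 r) := by
    refine Summable.hasProdLocallyUniformlyOn_nat_one_add isOpen_ball
      ((summable_geometric_of_lt_one ((norm_nonneg w).trans hwr.le) hr1).mul_left C)
      (.of_forall fun j x hx => ?_) fun j => (hf j).continuous.continuousOn
    rw [mem_ball_zero_iff] at hx
    exact (hbound j x (hx.trans hr1)).trans (by gcongr)
  have hdiff := hprod.differentiableOn (.of_forall fun s => ?_) isOpen_ball
  · exact (hdiff.differentiableAt (isOpen_ball.mem_nhds (mem_ball_zero_iff.mpr hwr)))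
      |>.differentiableWithinAt
  · simpa [Finset.prod_fn] using DifferentiableOn.finsetProd fun j _ =>
      ((differentiable_const 1).add (hf j)).differentiableOn

section TaylorCoefficients

variable {𝕜 : Type*} [NontriviallyNormedField 𝕜]

theorem isBigO_pow_mul {h : 𝕜 → 𝕜} (hh : ContinuousAt h 0) (n : ℕ) :
    (fun z => z ^ n * h z) =O[𝓝 0] (fun z => z ^ n) := by
  simpa using (isBigO_refl (fun z : 𝕜 => z ^ n) _).mul (hh.tendsto.isBigO_one 𝕜)

theorem eq_zero_of_sum_mul_pow_isBigO {n : ℕ} {d : ℕ → 𝕜}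
    (h : (fun z => ∑ i ∈ Finset.range n, d i * z ^ i) =O[𝓝[≠] 0] (fun z => z ^ n)) :
    ∀ i < n, d i = 0 := by
  induction n generalizing d with
  | zero => intro i hi; exact absurd hi (Nat.not_lt_zero i)
  | succ n ih =>
    have hd0 : d 0 = 0 := by
      have hlim : Tendsto (fun z => ∑ i ∈ Finset.range (n + 1), d i * z ^ i) (𝓝[≠] 0)
          (𝓝 (d 0)) := by
        have hc : Continuous (fun z : 𝕜 => ∑ i ∈ Finset.range (n + 1), d i * z ^ i) := by
          fun_prop
        simpa [Finset.sum_range_succ'] using (hc.tendsto 0).mono_left nhdsWithin_le_nhds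
      have hpow : Tendsto (fun z : 𝕜 => z ^ (n + 1)) (𝓝[≠] 0) (𝓝 0) := by
        simpa using ((continuous_pow (n + 1)).tendsto (0 : 𝕜)).mono_left nhdsWithin_le_nhds
      exact tendsto_nhds_unique hlim (h.trans_tendsto hpow)
    have hshift : (fun z => ∑ i ∈ Finset.range n, d (i + 1) * z ^ i) =O[𝓝[≠] 0]
        (fun z => z ^ n) := by
      refine ((isBigO_refl (fun z : 𝕜 => z⁻¹) _).mul h).congr' ?_ ?_ <;>
        filter_upwards [self_mem_nhdsWithin] with z (hz : z ≠ 0)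
      · rw [Finset.sum_range_succ', hd0, zero_mul, add_zero, Finset.mul_sum]
        exact Finset.sum_congr rfl fun i _ => by field_simp; ring
      · field_simp
        ring
    rintro (_ | i) hi
    · exact hd0
    · exact ih hshift i (by omega)

theorem iteratedDeriv_div_factorial_eq_of_isBigO [CharZero 𝕜] [CompleteSpace 𝕜] {f : 𝕜 → 𝕜}
    (hf : AnalyticAt 𝕜 f 0) {n : ℕ} {c : ℕ → 𝕜}
    (h : (fun z => f z - ∑ i ∈ Finset.range n, c i * z ^ i) =O[𝓝[≠] 0] (fun z => z ^ n)) :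
    ∀ i < n, iteratedDeriv i f 0 / i.factorial = c i := by
  obtain ⟨F, hF, hfF⟩ := hf.exists_eq_sum_add_pow_mul n
  have hpoly := eq_zero_of_sum_mul_pow_isBigO
    (d := fun i => iteratedDeriv i f 0 / i.factorial - c i)
    ((h.sub ((isBigO_pow_mul hF.continuousAt n).mono nhdsWithin_le_nhds)).congr_left
      fun z => by
        rw [hfF z]
        simp only [smul_eq_mul, sub_mul, Finset.sum_sub_distrib]
        rw [add_sub_right_comm, add_sub_cancel_right]
        congr 1
        exact Finset.sum_congr rfl fun i _ => by ring)
  exact fun i hi => sub_eq_zero.mp (hpoly i hi)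

end TaylorCoefficients

def thetaFactor (j : ℕ) (w : ℂ) : ℂ := (1 - w ^ (2 * j + 2)) * (1 + w ^ (2 * j + 1)) ^ 2

noncomputable def thetaProd (w : ℂ) : ℂ := ∏' j, thetaFactor j w

noncomputable def delta1OfHalfNome (w : ℂ) : ℂ := (thetaProd (-w) ^ 4 + thetaProd w ^ 4) / 8

theorem norm_thetaFactor_sub_one_le {w : ℂ} (hw : ‖w‖ ≤ 1) (j : ℕ) :
    ‖thetaFactor j w - 1‖ ≤ 7 * ‖w‖ ^ (2 * j + 1) := by
  have ht : ‖w‖ ^ (2 * j + 1) ≤ 1 := pow_le_one₀ (norm_nonneg w) hw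
  have ha : ‖w‖ ^ (2 * j + 2) ≤ ‖w‖ ^ (2 * j + 1) :=
    pow_le_pow_of_le_one (norm_nonneg w) hw (by omega)
  have hsq : ‖(1 + w ^ (2 * j + 1)) ^ 2‖ ≤ 2 ^ 2 := by
    rw [norm_pow]
    gcongr
    exact (norm_add_le _ _).trans (by rw [norm_one, norm_pow]; linarith)
  calc ‖thetaFactor j w - 1‖
      = ‖-w ^ (2 * j + 2) * (1 + w ^ (2 * j + 1)) ^ 2
          + w ^ (2 * j + 1) * (2 + w ^ (2 * j + 1))‖ := by
        congr 1; rw [thetaFactor]; ring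
    _ ≤ ‖w‖ ^ (2 * j + 2) * 2 ^ 2 + ‖w‖ ^ (2 * j + 1) * 3 := by
        refine norm_add_le_of_le ?_ ?_ <;> rw [norm_mul]
        · rw [norm_neg, norm_pow]; gcongr
        · rw [norm_pow]
          gcongr
          exact (norm_add_le _ _).trans (by rw [norm_pow]; norm_num; linarith)
    _ ≤ 7 * ‖w‖ ^ (2 * j + 1) := by linarith

theorem norm_thetaFactor_sub_one_le_pow {w : ℂ} (hw : ‖w‖ ≤ 1) (j : ℕ) :
    ‖thetaFactor j w - 1‖ ≤ 7 * ‖w‖ ^ j :=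
  (norm_thetaFactor_sub_one_le hw j).trans <| mul_le_mul_of_nonneg_left
    (pow_le_pow_of_le_one (norm_nonneg w) hw (by omega)) (by norm_num)

theorem multipliable_thetaFactor_add {w : ℂ} (hw : ‖w‖ < 1) (k : ℕ) :
    Multipliable (fun j => thetaFactor (j + k) w) := by
  simpa using multipliable_one_add_of_summable (f := fun j => thetaFactor (j + k) w - 1) <|
    (((summable_nat_add_iff k).mpr (summable_geometric_of_lt_one (norm_nonneg w) hw)).mul_left
      7).of_nonneg_of_le (fun j => norm_nonneg _) fun j => norm_thetaFactor_sub_one_le_pow hw.le _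

theorem differentiableOn_thetaProd : DifferentiableOn ℂ thetaProd (ball 0 1) := by
  have h := differentiableOn_tprod_one_add (f := (thetaFactor · · - 1))
    (fun j => by unfold thetaFactor; fun_prop)
    fun j w hw => norm_thetaFactor_sub_one_le_pow hw.le j
  simp only [add_sub_cancel] at h
  exact h

theorem isBigO_tprod_thetaFactor_add_three_sub_one :
    (fun w => ∏' j, thetaFactor (j + 3) w - 1) =O[𝓝 0] (fun w => w ^ 6) := by
  have hbound : ∀ᶠ w in 𝓝 (0 : ℂ), ∀ j,
      ‖thetaFactor (j + 3) w - 1‖ ≤ 7 * (1 / 2) ^ j * ‖w ^ 6‖ := by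
    filter_upwards [closedBall_mem_nhds (0 : ℂ) (by norm_num : (0 : ℝ) < 1 / 2)] with w hw j
    rw [mem_closedBall, dist_zero_right] at hw
    have hw1 : ‖w‖ ≤ 1 := hw.trans (by norm_num)
    calc ‖thetaFactor (j + 3) w - 1‖ ≤ 7 * ‖w‖ ^ (2 * (j + 3) + 1) :=
          norm_thetaFactor_sub_one_le hw1 (j + 3)
      _ = 7 * ‖w‖ ^ (j + 1 + j) * ‖w‖ ^ 6 := by ring_nf
      _ ≤ 7 * (1 / 2) ^ j * ‖w‖ ^ 6 := by
          gcongr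
          calc ‖w‖ ^ (j + 1 + j) ≤ ‖w‖ ^ j := pow_le_pow_of_le_one (norm_nonneg w) hw1 (by omega)
            _ ≤ (1 / 2) ^ j := by gcongr
      _ = 7 * (1 / 2) ^ j * ‖w ^ 6‖ := by rw [norm_pow]
  have hlim : Tendsto (fun w : ℂ => ‖w ^ 6‖) (𝓝 0) (𝓝 0) := by
    simpa using (continuous_pow 6).norm.tendsto (0 : ℂ)
  simpa using isBigO_tprod_one_add_sub_one (f := fun j w => thetaFactor (j + 3) w - 1)
    (summable_geometric_two.mul_left 7) hlim hbound

theorem prod_range_three_thetaFactor (w : ℂ) :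
    ∏ j ∈ Finset.range 3, thetaFactor j w = 1 + 2 * w + 2 * w ^ 4 + w ^ 6 * (-2 * w - 3 * w ^ 2
      + 2 * w ^ 3 - 3 * w ^ 4 - 4 * w ^ 5 - w ^ 6 - 4 * w ^ 7 + 2 * w ^ 8 - 2 * w ^ 10 + 4 * w ^ 11
      + w ^ 12 + 4 * w ^ 13 + 3 * w ^ 14 - 2 * w ^ 15 + 3 * w ^ 16 + 2 * w ^ 17 - 2 * w ^ 20
      - 2 * w ^ 23 - w ^ 24) := by
  simp only [Finset.prod_range_succ, Finset.prod_range_zero, thetaFactor]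
  ring

theorem isBigO_thetaProd_sub :
    (fun w => thetaProd w - (1 + 2 * w + 2 * w ^ 4)) =O[𝓝 0] (fun w => w ^ 6) := by
  have hsplit : ∀ᶠ w in 𝓝 (0 : ℂ), thetaProd w - (1 + 2 * w + 2 * w ^ 4) =
      (∏ j ∈ Finset.range 3, thetaFactor j w) * (∏' j, thetaFactor (j + 3) w - 1) +
        (∏ j ∈ Finset.range 3, thetaFactor j w - (1 + 2 * w + 2 * w ^ 4)) := by
    filter_upwards [ball_mem_nhds (0 : ℂ) one_pos] with w hw
    rw [thetaProd, ← Multipliable.prod_mul_tprod_nat_mul' (f := (thetaFactor · w))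
      (multipliable_thetaFactor_add (mem_ball_zero_iff.mp hw) 3)]
    ring
  have hQ : ContinuousAt (fun w => ∏ j ∈ Finset.range 3, thetaFactor j w) 0 := by
    unfold thetaFactor; fun_prop
  refine IsBigO.congr' ?_ (hsplit.mono fun w hw => hw.symm) .rfl
  refine (((hQ.tendsto.isBigO_one ℂ).mul isBigO_tprod_thetaFactor_add_three_sub_one).congr_right
    (by simp)).add ?_
  simp only [prod_range_three_thetaFactor, add_sub_cancel_left]
  exact isBigO_pow_mul (by fun_prop) 6

theorem isBigO_thetaProd_pow_four_sub :
    (fun w => thetaProd w ^ 4 - (1 + 2 * w + 2 * w ^ 4) ^ 4) =O[𝓝 0] (fun w => w ^ 6) := by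
  have hθ : ContinuousAt thetaProd 0 :=
    (differentiableOn_thetaProd.differentiableAt (ball_mem_nhds 0 one_pos)).continuousAt
  have hK : ContinuousAt (fun w => thetaProd w ^ 3 + thetaProd w ^ 2 * (1 + 2 * w + 2 * w ^ 4) +
      thetaProd w * (1 + 2 * w + 2 * w ^ 4) ^ 2 + (1 + 2 * w + 2 * w ^ 4) ^ 3) 0 := by
    fun_prop
  exact (isBigO_thetaProd_sub.mul (hK.tendsto.isBigO_one ℂ)).congr (fun w => by ring)
    (fun w => by simp)

theorem isBigO_delta1OfHalfNome_sub :
    (fun w => delta1OfHalfNome w - (1 / 4 + 6 * w ^ 2 + 6 * w ^ 4))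
      =O[𝓝 0] (fun w => w ^ 6) := by
  have hneg := isBigO_thetaProd_pow_four_sub.comp_tendsto
    (by simpa using (continuous_neg (G := ℂ)).tendsto 0)
  have hpoly := isBigO_pow_mul
    (h := fun w : ℂ => 24 + 6 * w ^ 2 + 24 * w ^ 4 + 8 * w ^ 6 + 4 * w ^ 10) (by fun_prop) 6
  refine (((hneg.congr_right fun w => by simp only [Function.comp_apply]; ring).add
    isBigO_thetaProd_pow_four_sub).const_mul_left (1 / 8)).add hpoly |>.congr_left fun w => ?_
  simp only [delta1OfHalfNome, Function.comp_apply]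
  ring

theorem differentiableOn_delta1OfHalfNome : DifferentiableOn ℂ delta1OfHalfNome (ball 0 1) :=
  (((differentiableOn_thetaProd.comp differentiable_neg.differentiableOn
    fun w hw => by simpa using hw).pow 4).add (differentiableOn_thetaProd.pow 4)).div_const 8

theorem qh_eq_qParam : qh = qParam 2 :=
  funext fun τ => by rw [qh, qParam]; congr 1; push_cast; ring

theorem qq_eq_qParam : qq = qParam 1 :=
  funext fun τ => by rw [qq, qParam]; congr 1; push_cast; ring

theorem qh_sq (τ : ℂ) : qh τ ^ 2 = qq τ := by
  rw [qh, qq, ← Complex.exp_nat_mul]; congr 1; push_cast; ring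

theorem qh_add_one (τ : ℂ) : qh (τ + 1) = -qh τ := by
  rw [qh, qh, mul_add, mul_one, Complex.exp_add, Complex.exp_pi_mul_I, mul_neg_one]

theorem theta3_eq_thetaProd (τ : ℂ) : theta3 τ = thetaProd (qh τ) :=
  tprod_congr fun j => by rw [thetaFactor, ← qh_sq]; ring

theorem theta2_eq_thetaProd_neg (τ : ℂ) : theta2 τ = thetaProd (-qh τ) :=
  tprod_congr fun j => by
    rw [thetaFactor, ← qh_sq, Even.neg_pow ⟨j + 1, by ring⟩, Odd.neg_pow ⟨j, rfl⟩]; ring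

theorem delta1_eq_delta1OfHalfNome (τ : ℂ) : delta1 τ = delta1OfHalfNome (qh τ) := by
  rw [delta1, delta1OfHalfNome, theta2_eq_thetaProd_neg, theta3_eq_thetaProd]

theorem periodic_delta1 : Function.Periodic delta1 1 := fun τ => by
  rw [delta1_eq_delta1OfHalfNome, delta1_eq_delta1OfHalfNome, qh_add_one, delta1OfHalfNome,
    delta1OfHalfNome, neg_neg, add_comm]

theorem differentiableAt_delta1 {τ : ℂ} (hτ : 0 < τ.im) : DifferentiableAt ℂ delta1 τ := by
  rw [show delta1 = delta1OfHalfNome ∘ qh from funext delta1_eq_delta1OfHalfNome, qh_eq_qParam]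
  refine (differentiableOn_delta1OfHalfNome.differentiableAt (isOpen_ball.mem_nhds ?_)).comp τ
    differentiable_qParam.differentiableAt
  exact mem_ball_zero_iff.mpr (norm_qParam_lt_one two_pos hτ)

theorem boundedAtFilter_delta1 : BoundedAtFilter (comap Complex.im atTop) delta1 := by
  rw [show delta1 = delta1OfHalfNome ∘ qh from funext delta1_eq_delta1OfHalfNome, qh_eq_qParam]
  have hΦ : ContinuousAt delta1OfHalfNome 0 :=
    (differentiableOn_delta1OfHalfNome.differentiableAt (ball_mem_nhds 0 one_pos)).continuousAt
  exact (hΦ.tendsto.comp ((qParam_tendsto two_pos).mono_right nhdsWithin_le_nhds)).isBigO_one ℝ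

theorem differentiableOn_cuspFunction_delta1 :
    DifferentiableOn ℂ (cuspFunction 1 delta1) (ball 0 1) := by
  intro q hq
  rw [mem_ball_zero_iff] at hq
  refine DifferentiableAt.differentiableWithinAt ?_
  rcases eq_or_ne q 0 with rfl | hq0
  · exact periodic_delta1.differentiableAt_cuspFunction_zero one_pos
      (eventually_of_mem (preimage_mem_comap (Ioi_mem_atTop 0)) fun τ hτ =>
        differentiableAt_delta1 hτ)
      boundedAtFilter_delta1
  · rw [← qParam_right_inv one_ne_zero hq0]
    exact periodic_delta1.differentiableAt_cuspFunction one_ne_zero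
      (differentiableAt_delta1 (im_invQParam_pos_of_norm_lt_one one_pos hq hq0))

theorem cuspFunction_delta1_qq (τ : ℂ) : cuspFunction 1 delta1 (qq τ) = delta1 τ := by
  rw [qq_eq_qParam]
  exact periodic_delta1.eq_cuspFunction one_ne_zero τ

theorem cuspFunction_delta1_sq {w : ℂ} (hw : w ≠ 0) :
    cuspFunction 1 delta1 (w ^ 2) = delta1OfHalfNome w := by
  obtain ⟨τ, rfl⟩ : ∃ τ, qh τ = w :=
    ⟨_, qh_eq_qParam ▸ qParam_right_inv two_ne_zero hw⟩
  rw [qh_sq, cuspFunction_delta1_qq, delta1_eq_delta1OfHalfNome]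

theorem isBigO_cuspFunction_delta1_sub :
    (fun q => cuspFunction 1 delta1 q - (1 / 4 + 6 * q + 6 * q ^ 2))
      =O[𝓝[≠] 0] (fun q => q ^ 3) := by
  -- Any square root will do: `g (w ^ 2) = Φ w` holds for every `w ≠ 0`.
  have hsq : ∀ q : ℂ, (q ^ (2⁻¹ : ℂ)) ^ 2 = q := fun q => Complex.cpow_ofNat_inv_pow q 2
  have hsqrt : Tendsto (fun q : ℂ => q ^ (2⁻¹ : ℂ)) (𝓝[≠] 0) (𝓝 0) := by
    have := Complex.continuousAt_cpow_const_of_re_pos (z := 0) (w := 2⁻¹) (Or.inl le_rfl)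
      (by norm_num)
    simpa using this.tendsto.mono_left nhdsWithin_le_nhds
  refine (isBigO_delta1OfHalfNome_sub.comp_tendsto hsqrt).congr' ?_ (.of_forall fun q => ?_)
  · filter_upwards [self_mem_nhdsWithin] with q (hq : q ≠ 0)
    have hne : q ^ (2⁻¹ : ℂ) ≠ 0 := fun h => hq (by rw [← hsq q, h, zero_pow two_ne_zero])
    simp only [Function.comp_apply]
    rw [← cuspFunction_delta1_sq hne,
      show (q ^ (2⁻¹ : ℂ)) ^ 4 = ((q ^ (2⁻¹ : ℂ)) ^ 2) ^ 2 by ring, hsq]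
  · simp only [Function.comp_apply]
    rw [show (q ^ (2⁻¹ : ℂ)) ^ 6 = ((q ^ (2⁻¹ : ℂ)) ^ 2) ^ 3 by ring, hsq]

/-- The Fourier expansion of `δ₁` in `q = e^{2πiτ}` begins `δ₁ = 1/4 + 6q + 6q² + ⋯`:
`δ₁` is a holomorphic function of `q` on the punctured unit disc extending holomorphically to
`q = 0`, and its Taylor coefficients at `q = 0` in degrees `0`, `1`, `2` are `1/4`, `6`, `6`. -/
theorem delta1_q_expansion :
    ∃ g : ℂ → ℂ, DifferentiableOn ℂ g (Metric.ball (0 : ℂ) 1) ∧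
      (∀ τ : ℂ, 0 < τ.im → g (qq τ) = delta1 τ) ∧
      g 0 = 1 / 4 ∧
      iteratedDeriv 1 g 0 / (Nat.factorial 1 : ℂ) = 6 ∧
      iteratedDeriv 2 g 0 / (Nat.factorial 2 : ℂ) = 6 := by
  have hg := differentiableOn_cuspFunction_delta1.analyticAt (ball_mem_nhds 0 one_pos)
  have hcoeff := iteratedDeriv_div_factorial_eq_of_isBigO hg (n := 3)
    (c := fun i => if i = 0 then 1 / 4 else 6)
    (by simpa [Finset.sum_range_succ, add_assoc] using isBigO_cuspFunction_delta1_sub)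
  refine ⟨_, differentiableOn_cuspFunction_delta1, fun τ _ => cuspFunction_delta1_qq τ,
    by simpa using hcoeff 0 (by norm_num), hcoeff 1 (by norm_num), hcoeff 2 (by norm_num)⟩
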